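/- arXiv:2411.11355 — 2 statements merged into one kernel-verified Lean document; each statement's English description precedes it below -/
import Mathlib

section
/- Let Λ ⊂ ℝ² be a lattice of rank 2 and let M be an m×2 real matrix of rank 2. Let x₁ ∈ Λ be a nonzero vector with |M x₁| = μ_M(Λ) := min{|Mx| : x ∈ Λ, x ≠ 0}. Then there exists x₂ ∈ Λ such that: (i) Λ = ℤx₁ + ℤx₂; (ii) for all r ∈ ℝ², |r₁ M x₁ + r₂ M x₂| is bounded above and below by constants, depending only on m, times |r₁||Mx₁| + |r₂||Mx₂|; (iii) |Mx₁|·|Mx₂| is bounded above and below by constants, depending only on m, times covol(Λ)·area(M[0,1]²), where M[0,1]² = {Mt : t ∈ [0,1]²} ⊂ ℝ^m, area denotes 2-dimensional Hausdorff measure, and covol(Λ) is the covolume of Λ. -/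
open MeasureTheory Real Matrix Finset

noncomputable section

/-- `e(x) = exp(2πix)`. -/
def e2pi (x : ℝ) : ℂ := Complex.exp (2 * Real.pi * Complex.I * x)

/-- Euclidean norm on `ℝ²`. -/
def nrm2 (x : ℝ × ℝ) : ℝ := Real.sqrt (x.1 ^ 2 + x.2 ^ 2)

/-- Dot product on `ℝ²`. -/
def dot2 (x y : ℝ × ℝ) : ℝ := x.1 * y.1 + x.2 * y.2

/-- `x^⊥ = (x₂, -x₁)`. -/
def perp2 (x : ℝ × ℝ) : ℝ × ℝ := (x.2, -x.1)

/-- `δ_n` for `n ∈ ℤ²`. -/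
def deltaInt (n : ℤ × ℤ) : ℂ := if n = 0 then 1 else 0

/-- `h(y,z) = Σ_{j ≥ 1} (1/(yj)) (ω(yj) − ω(|z|/(yj)))`. -/
def hFun (ω : ℝ → ℝ) (y z : ℝ) : ℝ :=
  ∑' j : ℕ+, (1 / (y * ((j : ℕ) : ℝ))) *
    (ω (y * ((j : ℕ) : ℝ)) - ω (|z| / (y * ((j : ℕ) : ℝ))))

/-- `c = (∫_{ℝ²} ω(|x|) dx)⁻¹`. -/
def cConst (ω : ℝ → ℝ) : ℝ := (∫ x : ℝ × ℝ, ω (nrm2 x))⁻¹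

/-- The function `p_{1,q}`. -/
def p1 (ω ω₀ : ℝ → ℝ) (Q : ℝ) (q : ℕ) (w : ℝ × ℝ) : ℂ :=
  -(cConst ω / Q : ℝ) * ∫ x : ℝ × ℝ,
    (((ω₀ (nrm2 x / Q ^ ((3 : ℝ) / 2)) *
      ∑' j : ℕ+, (1 / ((q : ℝ) * ((j : ℕ) : ℝ)) ^ 2) *
        ω (nrm2 x / (((j : ℕ) : ℝ) * (q : ℝ) * Q ^ ((1 : ℝ) / 2)))) : ℝ) : ℂ) *
      e2pi (-(dot2 w x))

/-- The function `p_{2,r,k,q}` (with `q` allowed to be a real parameter). -/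
def p2 (ω ω₀ : ℝ → ℝ) (Q : ℝ) (r : ℤ × ℤ) (k : ℕ) (q : ℝ) (w : ℝ × ℝ) : ℂ :=
  ((cConst ω / Q ^ 3 : ℝ) : ℂ) * ∫ x : ℝ × ℝ,
    (((ω₀ (nrm2 x / Q ^ ((3 : ℝ) / 2)) *
      hFun ω ((k : ℝ) * q / Q) (((r.1 : ℝ) * x.1 + (r.2 : ℝ) * x.2) / Q ^ 2)) : ℝ) : ℂ) *
      e2pi (-(dot2 w x))

/-- The lattice `Λ(a,q) = {k a + q y}` as a subset of `ℤ²`. -/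
def Lambda (a : ℤ × ℤ) (q : ℕ) : Set (ℤ × ℤ) :=
  {v | ∃ k : ℤ, ∃ y : ℤ × ℤ, v = (k * a.1 + (q : ℤ) * y.1, k * a.2 + (q : ℤ) * y.2)}

/-- `k(r) = gcd(r₁,r₂)/gcd(gcd(r₁,r₂),q)`. -/
def kOf (r : ℤ × ℤ) (q : ℕ) : ℕ := Int.gcd r.1 r.2 / Nat.gcd (Int.gcd r.1 r.2) q

/-- The function `p_{Λ(a,q)}`. -/
def pLambda (ω ω₀ : ℝ → ℝ) (Q : ℝ) (q : ℕ) (a : ℤ × ℤ) (w : ℝ × ℝ) : ℂ :=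
  p1 ω ω₀ Q q w +
    ∑' r : ℤ × ℤ,
      Set.indicator {r : ℤ × ℤ | r ∈ Lambda a q ∧ r ≠ 0}
        (fun r => ((ω (nrm2 ((r.1 : ℝ), (r.2 : ℝ)) / Q ^ ((1 : ℝ) / 2)) : ℝ) : ℂ) *
          p2 ω ω₀ Q r (kOf r q) (q : ℝ) w) r

/-- Reduced residues `a mod q` (canonical representatives) with `gcd(a₁,a₂,q)=1`. -/
def residues (q : ℕ) : Finset (ℕ × ℕ) :=
  ((Finset.range q) ×ˢ (Finset.range q)).filter (fun a => Nat.gcd (Nat.gcd a.1 a.2) q = 1)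

/-- Normalized directional derivative along `ξ`. -/
def dirDeriv (ξ : ℝ × ℝ) (f : ℝ × ℝ → ℂ) : ℝ × ℝ → ℂ :=
  fun w => fderiv ℝ f w (ξ.1 / nrm2 ξ, ξ.2 / nrm2 ξ)

/-- Fourier transform `ω̂₀(t) = ∫ ω₀(x) e(−xt) dx`. -/
def fourierW0 (ω₀ : ℝ → ℝ) (t : ℝ) : ℂ := ∫ x : ℝ, ((ω₀ x : ℝ) : ℂ) * e2pi (-(x * t))

/-- `|M(w)x|` for the 3×2 matrix `M(w)`. -/
def Mnorm (Q : ℝ) (w : ℝ × ℝ) (x : ℝ × ℝ) : ℝ :=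
  Real.sqrt (x.1 ^ 2 / Q + x.2 ^ 2 / Q + Q ^ 2 * (w.1 * x.2 - w.2 * x.1) ^ 2)

/-- `μ_{M(w)}(Λ(a,q))`: infimum of `|M(w)x|` over nonzero lattice points. -/
def muM (Q : ℝ) (w : ℝ × ℝ) (a : ℤ × ℤ) (q : ℕ) : ℝ :=
  sInf {t : ℝ | ∃ v : ℤ × ℤ, v ∈ Lambda a q ∧ v ≠ 0 ∧ t = Mnorm Q w ((v.1 : ℝ), (v.2 : ℝ))}

/-- Quadratic form attached to an integer matrix, over any commutative ring. -/
def quadEval {s : ℕ} {R : Type*} [CommRing R] (M : Matrix (Fin s) (Fin s) ℤ)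
    (x : Fin s → R) : R :=
  ∑ i, ∑ j, (M i j : R) * x i * x j

/-- `e_q(n) = exp(2πin/q)` for an integer `n`. -/
def eqc (q : ℕ) (n : ℤ) : ℂ := e2pi ((n : ℝ) / (q : ℝ))

/-- The exponential sum `D_q(u)`. -/
def Dq (s : ℕ) (M₁ M₂ : Matrix (Fin s) (Fin s) ℤ) (q : ℕ) (u : Fin s → ℤ) : ℂ :=
  ∑ a ∈ residues q, ∑ b ∈ Fintype.piFinset (fun _ : Fin s => Finset.range q),
    eqc q ((a.1 : ℤ) * quadEval M₁ (fun i => (b i : ℤ)) +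
      (a.2 : ℤ) * quadEval M₂ (fun i => (b i : ℤ)) + ∑ i, (b i : ℤ) * u i)

/-- The exponential sum `S_{q,dc}(u)`. -/
def Sq (s : ℕ) (M₁ M₂ : Matrix (Fin s) (Fin s) ℤ) (q d : ℕ) (c : ℤ × ℤ)
    (u : Fin s → ℤ) : ℂ :=
  ∑ a ∈ (residues q).filter
      (fun a => (q : ℤ) ∣ (d : ℤ) * (c.1 * (a.2 : ℤ) - c.2 * (a.1 : ℤ))),
    ∑ b ∈ Fintype.piFinset (fun _ : Fin s => Finset.range q),
      eqc q ((a.1 : ℤ) * quadEval M₁ (fun i => (b i : ℤ)) +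
        (a.2 : ℤ) * quadEval M₂ (fun i => (b i : ℤ)) + ∑ i, (b i : ℤ) * u i)

/-- The pair of quadratic forms given by `M₁, M₂` is nonsingular: at every nonzero
complex common zero the gradients (equivalently `M₁x`, `M₂x`) are linearly independent. -/
def NonsingularPair (s : ℕ) (M₁ M₂ : Matrix (Fin s) (Fin s) ℤ) : Prop :=
  ∀ x : Fin s → ℂ, x ≠ 0 →
    quadEval M₁ x = 0 → quadEval M₂ x = 0 →
    LinearIndependent ℂ
      ![(M₁.map (fun z : ℤ => (z : ℂ))).mulVec x, (M₂.map (fun z : ℤ => (z : ℂ))).mulVec x]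

/-- Euclidean norm on `Fin m → ℝ`. -/
def enorm' {m : ℕ} (v : Fin m → ℝ) : ℝ := Real.sqrt (∑ i, v i ^ 2)

end

/-- The set `{x = p b₁ + q b₂ : p,q ∈ ℤ}` generated by `b₁, b₂`. -/
def latticeOf (b₁ b₂ : Fin 2 → ℝ) : Set (Fin 2 → ℝ) :=
  {x | ∃ p q : ℤ, x = p • b₁ + q • b₂}

/-- The image `M[0,1]²` inside Euclidean space `ℝ^m`. -/
def parImage (m : ℕ) (M : Matrix (Fin m) (Fin 2) ℝ) : Set (EuclideanSpace ℝ (Fin m)) :=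
  (fun t : ℝ × ℝ => (WithLp.equiv 2 (Fin m → ℝ)).symm (M.mulVec ![t.1, t.2])) ''
    (Set.Icc (0 : ℝ) 1 ×ˢ Set.Icc (0 : ℝ) 1)

/-!
A vector `x₁` minimising `x ↦ |Mx|` on `Λ \ {0}` is primitive, so it extends to a basis `x₁, y`
of `Λ`. Replacing `y` by `x₂ = y - n x₁`, with `n` the integer nearest to
`⟪Mx₁, My⟫ / |Mx₁|²`, gives a Gauss-reduced pair: `|⟪Mx₁, Mx₂⟫| ≤ |Mx₁|² / 2` and
`|Mx₁| ≤ |Mx₂|`. Such a pair is almost orthogonal, which gives (ii) with constant `2`, and its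
Gram determinant `|Mx₁|²|Mx₂|² - ⟪Mx₁, Mx₂⟫²` lies between `3/4` and `1` times `(|Mx₁||Mx₂|)²`.
This Gram determinant equals `covol(Λ)² det(MᵀM)`, while `μH[2] (M[0,1]²)` is `√det(MᵀM)` times
the constant `μH[2] ([0,1]²)`, which gives (iii).
-/

open scoped InnerProductSpace

section GaussReduced

variable {E : Type*} [NormedAddCommGroup E] [InnerProductSpace ℝ E]

def IsGaussReduced (u v : E) : Prop :=
  |⟪u, v⟫_ℝ| ≤ ‖u‖ ^ 2 / 2 ∧ ‖u‖ ≤ ‖v‖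

theorem exists_abs_inner_sub_zsmul_le {u : E} (hu : u ≠ 0) (y : E) :
    ∃ n : ℤ, |⟪u, y - n • u⟫_ℝ| ≤ ‖u‖ ^ 2 / 2 := by
  set c := ⟪u, y⟫_ℝ / ‖u‖ ^ 2
  have hu2 : 0 < ‖u‖ ^ 2 := by positivity
  have hc : c * ‖u‖ ^ 2 = ⟪u, y⟫_ℝ := div_mul_cancel₀ _ hu2.ne'
  refine ⟨round c, ?_⟩
  have hinner : ⟪u, y - round c • u⟫_ℝ = (c - round c) * ‖u‖ ^ 2 := by
    rw [inner_sub_right, ← Int.cast_smul_eq_zsmul ℝ, real_inner_smul_right,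
      real_inner_self_eq_norm_sq]
    linear_combination -hc
  rw [hinner, abs_mul, abs_of_pos hu2]
  nlinarith [abs_sub_round c]

namespace IsGaussReduced

variable {u v : E}

theorem norm_smul_add_smul_mem_Icc (h : IsGaussReduced u v) {K : ℝ} (hK : 2 ≤ K) (a b : ℝ) :
    ‖a • u + b • v‖ ∈
      Set.Icc (K⁻¹ * (|a| * ‖u‖ + |b| * ‖v‖)) (K * (|a| * ‖u‖ + |b| * ‖v‖)) := by
  obtain ⟨huv, hle⟩ := h
  have hS : 0 ≤ |a| * ‖u‖ + |b| * ‖v‖ := by positivity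
  have hsq : ‖a • u + b • v‖ ^ 2 =
      |a| ^ 2 * ‖u‖ ^ 2 + 2 * (a * b * ⟪u, v⟫_ℝ) + |b| ^ 2 * ‖v‖ ^ 2 := by
    rw [norm_add_sq_real, norm_smul, norm_smul, real_inner_smul_left, real_inner_smul_right,
      Real.norm_eq_abs, Real.norm_eq_abs]
    ring
  have hcross : -(|a| * |b| * (‖u‖ ^ 2 / 2)) ≤ a * b * ⟪u, v⟫_ℝ := by
    have : |a * b * ⟪u, v⟫_ℝ| ≤ |a| * |b| * (‖u‖ ^ 2 / 2) := by
      rw [abs_mul, abs_mul]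
      gcongr
    linarith [neg_abs_le (a * b * ⟪u, v⟫_ℝ)]
  -- `|a| |b| ‖u‖² ≤ |a| ‖u‖ |b| ‖v‖` bounds the cross term, and `α² + β² - αβ ≥ (α + β)² / 4`
  have hlow : (|a| * ‖u‖ + |b| * ‖v‖) / 2 ≤ ‖a • u + b • v‖ := by
    rw [← pow_le_pow_iff_left₀ (by positivity) (norm_nonneg _) two_ne_zero, hsq]
    nlinarith [mul_nonneg (mul_nonneg (abs_nonneg a) (abs_nonneg b))
        (mul_nonneg (norm_nonneg u) (sub_nonneg.mpr hle)),
      sq_nonneg (|a| * ‖u‖ - |b| * ‖v‖)]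
  constructor
  · calc K⁻¹ * (|a| * ‖u‖ + |b| * ‖v‖) ≤ (|a| * ‖u‖ + |b| * ‖v‖) / 2 := by
          rw [inv_mul_eq_div]
          exact div_le_div_of_nonneg_left hS two_pos hK
      _ ≤ ‖a • u + b • v‖ := hlow
  · calc ‖a • u + b • v‖ ≤ |a| * ‖u‖ + |b| * ‖v‖ := by
          simpa only [norm_smul, Real.norm_eq_abs] using norm_add_le (a • u) (b • v)
      _ ≤ K * (|a| * ‖u‖ + |b| * ‖v‖) := le_mul_of_one_le_left hS (by linarith)

theorem norm_mul_norm_mem_Icc (h : IsGaussReduced u v) {K c Y : ℝ} (hK : 0 < K) (hcK : c ≤ K)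
    (hKc : 2 ≤ K * c) (hY : 0 ≤ Y) (hY2 : Y ^ 2 = ‖u‖ ^ 2 * ‖v‖ ^ 2 - ⟪u, v⟫_ℝ ^ 2) :
    ‖u‖ * ‖v‖ ∈ Set.Icc (K⁻¹ * (Y * c)) (K * (Y * c)) := by
  obtain ⟨huv, hle⟩ := h
  have hinner : ⟪u, v⟫_ℝ ^ 2 ≤ ‖u‖ ^ 2 * ‖v‖ ^ 2 / 4 := by
    have h1 : ⟪u, v⟫_ℝ ^ 2 ≤ (‖u‖ ^ 2 / 2) ^ 2 := by
      rw [← sq_abs]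
      gcongr
    have h2 : ‖u‖ ^ 2 ≤ ‖v‖ ^ 2 := by gcongr
    nlinarith [sq_nonneg ‖u‖]
  have hY_le : Y ≤ ‖u‖ * ‖v‖ := by
    rw [← pow_le_pow_iff_left₀ hY (by positivity) two_ne_zero]
    nlinarith [sq_nonneg ⟪u, v⟫_ℝ]
  have hle_Y : ‖u‖ * ‖v‖ ≤ 2 * Y := by
    rw [← pow_le_pow_iff_left₀ (by positivity) (by positivity) two_ne_zero]
    nlinarith
  constructor
  · calc K⁻¹ * (Y * c) ≤ Y := by
          rw [inv_mul_le_iff₀ hK, mul_comm K]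
          exact mul_le_mul_of_nonneg_left hcK hY
      _ ≤ ‖u‖ * ‖v‖ := hY_le
  · calc ‖u‖ * ‖v‖ ≤ Y * 2 := by linarith
      _ ≤ Y * (K * c) := mul_le_mul_of_nonneg_left hKc hY
      _ = K * (Y * c) := by ring

end IsGaussReduced

end GaussReduced

section Lattice

variable {b₁ b₂ : Fin 2 → ℝ}

theorem latticeOf_eq_of_mul_sub_mul_eq_one {p q s t : ℤ} (h : p * t - q * s = 1) :
    latticeOf (p • b₁ + q • b₂) (s • b₁ + t • b₂) = latticeOf b₁ b₂ := by
  ext x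
  constructor
  · rintro ⟨a, c, rfl⟩
    exact ⟨a * p + c * s, a * q + c * t, by module⟩
  · rintro ⟨a, c, rfl⟩
    refine ⟨a * t - c * s, c * p - a * q, ?_⟩
    linear_combination (norm := module) -h • (a • b₁ + c • b₂)

theorem cross_zsmul_add_zsmul (p q s t : ℤ) :
    (p • b₁ + q • b₂) 0 * (s • b₁ + t • b₂) 1 - (p • b₁ + q • b₂) 1 * (s • b₁ + t • b₂) 0 =
      (p * t - q * s : ℤ) * (b₁ 0 * b₂ 1 - b₁ 1 * b₂ 0) := by
  simp only [Pi.add_apply, Pi.smul_apply]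
  simp only [zsmul_eq_mul]
  push_cast
  ring

theorem cross_ne_zero_of_linearIndependent (hb : LinearIndependent ℝ ![b₁, b₂]) :
    b₁ 0 * b₂ 1 - b₁ 1 * b₂ 0 ≠ 0 := by
  have hunit : IsUnit (Matrix.of ![b₁, b₂]) := Matrix.linearIndependent_rows_iff_isUnit.mp hb
  rw [Matrix.isUnit_iff_isUnit_det, Matrix.det_fin_two] at hunit
  exact hunit.ne_zero

theorem gcd_eq_one_of_forall_norm_le {E : Type*} [NormedAddCommGroup E] [NormedSpace ℝ E]
    {L : (Fin 2 → ℝ) →ₗ[ℝ] E} (hL : Function.Injective L) {p q : ℤ} (hx : p • b₁ + q • b₂ ≠ 0)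
    (hmin : ∀ x ∈ latticeOf b₁ b₂, x ≠ 0 → ‖L (p • b₁ + q • b₂)‖ ≤ ‖L x‖) :
    Int.gcd p q = 1 := by
  obtain ⟨p', hp⟩ := Int.gcd_dvd_left p q
  obtain ⟨q', hq⟩ := Int.gcd_dvd_right p q
  set d := Int.gcd p q
  have hdx : p • b₁ + q • b₂ = (d : ℤ) • (p' • b₁ + q' • b₂) := by
    rw [hp, hq, smul_add, mul_smul, mul_smul]
  have hx' : p' • b₁ + q' • b₂ ≠ 0 := fun h0 => hx (by rw [hdx, h0, smul_zero])
  have hd : d ≠ 0 := fun h0 => hx (by rw [hdx, h0, Nat.cast_zero, zero_smul])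
  have hpos : 0 < ‖L (p' • b₁ + q' • b₂)‖ :=
    norm_pos_iff.mpr fun h0 => hx' (hL (h0.trans (map_zero L).symm))
  have hle := hmin _ ⟨p', q', rfl⟩ hx'
  rw [hdx, map_zsmul, norm_zsmul ℝ, Int.cast_natCast, Real.norm_natCast] at hle
  have hd1 : (d : ℝ) ≤ 1 := (mul_le_iff_le_one_left hpos).mp hle
  have : d ≤ 1 := by exact_mod_cast hd1
  omega

theorem exists_isGaussReduced_partner {E : Type*} [NormedAddCommGroup E] [InnerProductSpace ℝ E]
    {L : (Fin 2 → ℝ) →ₗ[ℝ] E} (hL : Function.Injective L) (hb : LinearIndependent ℝ ![b₁, b₂])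
    {x₁ : Fin 2 → ℝ} (hx₁ : x₁ ∈ latticeOf b₁ b₂) (hx₁0 : x₁ ≠ 0)
    (hmin : ∀ x ∈ latticeOf b₁ b₂, x ≠ 0 → ‖L x₁‖ ≤ ‖L x‖) :
    ∃ x₂, latticeOf x₁ x₂ = latticeOf b₁ b₂ ∧
      x₁ 0 * x₂ 1 - x₁ 1 * x₂ 0 = b₁ 0 * b₂ 1 - b₁ 1 * b₂ 0 ∧ IsGaussReduced (L x₁) (L x₂) := by
  obtain ⟨p, q, rfl⟩ := hx₁
  obtain ⟨t, s, hts⟩ :=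
    Int.isCoprime_iff_gcd_eq_one.mpr (gcd_eq_one_of_forall_norm_le hL hx₁0 hmin)
  have hLx₁ : L (p • b₁ + q • b₂) ≠ 0 := fun h0 => hx₁0 (hL (h0.trans (map_zero L).symm))
  obtain ⟨n, hn⟩ := exists_abs_inner_sub_zsmul_le hLx₁ (L ((-s) • b₁ + t • b₂))
  set x₂ := (-s - n * p) • b₁ + (t - n * q) • b₂
  have hdet : p * (t - n * q) - q * (-s - n * p) = 1 := by linear_combination hts
  have hlat : latticeOf (p • b₁ + q • b₂) x₂ = latticeOf b₁ b₂ :=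
    latticeOf_eq_of_mul_sub_mul_eq_one hdet
  have hcross : (p • b₁ + q • b₂) 0 * x₂ 1 - (p • b₁ + q • b₂) 1 * x₂ 0 =
      b₁ 0 * b₂ 1 - b₁ 1 * b₂ 0 := by
    rw [cross_zsmul_add_zsmul, hdet, Int.cast_one, one_mul]
  have hx₂0 : x₂ ≠ 0 := by
    intro h0
    rw [h0] at hcross
    exact cross_ne_zero_of_linearIndependent hb (by simpa using hcross.symm)
  have hx₂ : x₂ = ((-s) • b₁ + t • b₂) - n • (p • b₁ + q • b₂) := by module
  refine ⟨x₂, hlat, hcross, ?_, hmin x₂ (hlat ▸ ⟨0, 1, by simp⟩) hx₂0⟩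
  rwa [hx₂, map_sub, map_zsmul]

end Lattice

theorem Matrix.mulVec_injective_of_rank_eq_card {K ι κ : Type*} [Field K] [Fintype κ]
    {M : Matrix ι κ K} (h : M.rank = Fintype.card κ) : Function.Injective M.mulVec := by
  have hsum := LinearMap.finrank_range_add_finrank_ker M.mulVecLin
  rw [← Matrix.rank, h, Module.finrank_fintype_fun_eq_card, add_eq_left] at hsum
  exact LinearMap.ker_eq_bot.mp (Submodule.finrank_eq_zero.mp hsum)

theorem enorm'_eq_norm {m : ℕ} (v : Fin m → ℝ) :
    enorm' v = ‖(WithLp.toLp 2 v : EuclideanSpace ℝ (Fin m))‖ := by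
  simp [enorm', EuclideanSpace.norm_eq]

theorem exists_isGaussReduced_partner_of_mulVec_injective {m : ℕ} {b₁ b₂ : Fin 2 → ℝ}
    {M : Matrix (Fin m) (Fin 2) ℝ} (hM : Function.Injective M.mulVec)
    (hb : LinearIndependent ℝ ![b₁, b₂]) {x₁ : Fin 2 → ℝ} (hx₁ : x₁ ∈ latticeOf b₁ b₂)
    (hx₁0 : x₁ ≠ 0)
    (hmin : ∀ x ∈ latticeOf b₁ b₂, x ≠ 0 → enorm' (M *ᵥ x₁) ≤ enorm' (M *ᵥ x)) :
    ∃ x₂, latticeOf x₁ x₂ = latticeOf b₁ b₂ ∧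
      x₁ 0 * x₂ 1 - x₁ 1 * x₂ 0 = b₁ 0 * b₂ 1 - b₁ 1 * b₂ 0 ∧
      IsGaussReduced (WithLp.toLp 2 (M *ᵥ x₁) : EuclideanSpace ℝ (Fin m))
        (WithLp.toLp 2 (M *ᵥ x₂)) := by
  let L : (Fin 2 → ℝ) →ₗ[ℝ] EuclideanSpace ℝ (Fin m) :=
    (WithLp.linearEquiv 2 ℝ (Fin m → ℝ)).symm.toLinearMap ∘ₗ M.mulVecLin
  have hL : Function.Injective L := (WithLp.linearEquiv 2 ℝ (Fin m → ℝ)).symm.injective.comp hM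
  simp only [enorm'_eq_norm] at hmin
  exact exists_isGaussReduced_partner hL hb hx₁ hx₁0 hmin

theorem inner_toLp_mulVec {ι κ : Type*} [Fintype ι] [Fintype κ] (M : Matrix ι κ ℝ)
    (x y : κ → ℝ) :
    ⟪(WithLp.toLp 2 (M *ᵥ x) : EuclideanSpace ℝ ι), WithLp.toLp 2 (M *ᵥ y)⟫_ℝ =
      x ⬝ᵥ (Mᵀ * M) *ᵥ y := by
  rw [EuclideanSpace.inner_eq_star_dotProduct, ← Matrix.mulVec_mulVec, Matrix.dotProduct_mulVec x,
    Matrix.vecMul_transpose, star_trivial, dotProduct_comm]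

theorem Matrix.IsSymm.dotProduct_mulVec_mul_sub_sq {R : Type*} [CommRing R]
    {G : Matrix (Fin 2) (Fin 2) R} (hG : G.IsSymm) (x y : Fin 2 → R) :
    (x ⬝ᵥ G *ᵥ x) * (y ⬝ᵥ G *ᵥ y) - (x ⬝ᵥ G *ᵥ y) ^ 2 = (x 0 * y 1 - x 1 * y 0) ^ 2 * G.det := by
  have h10 : G 1 0 = G 0 1 := hG.apply 0 1
  simp only [dotProduct, Matrix.mulVec, Fin.sum_univ_two, Matrix.det_fin_two, h10]
  ring

theorem normDet_toEuclideanLin_sq {ι κ : Type*} [Fintype ι] [DecidableEq ι] [Fintype κ]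
    [DecidableEq κ] (M : Matrix ι κ ℝ) : (Matrix.toEuclideanLin M).normDet ^ 2 = (Mᵀ * M).det := by
  have h := (Matrix.toEuclideanLin M).normDet_sq
  rwa [← Matrix.toEuclideanLin_conjTranspose_eq_adjoint, ← Matrix.toLpLin_mul_same,
    Matrix.toLpLin_eq_toLin, LinearMap.det_toLin, Matrix.conjTranspose_eq_transpose_of_trivial,
    RCLike.ofReal_real_eq_id, id] at h

theorem norm_sq_mul_norm_sq_sub_inner_sq {m : ℕ} (M : Matrix (Fin m) (Fin 2) ℝ)
    (x y : Fin 2 → ℝ) :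
    ‖(WithLp.toLp 2 (M *ᵥ x) : EuclideanSpace ℝ (Fin m))‖ ^ 2 * ‖WithLp.toLp 2 (M *ᵥ y)‖ ^ 2 -
        ⟪(WithLp.toLp 2 (M *ᵥ x) : EuclideanSpace ℝ (Fin m)), WithLp.toLp 2 (M *ᵥ y)⟫_ℝ ^ 2 =
      ((x 0 * y 1 - x 1 * y 0) * (Matrix.toEuclideanLin M).normDet) ^ 2 := by
  have hG : (Mᵀ * M).IsSymm := by simp [Matrix.IsSymm, Matrix.transpose_mul]
  rw [← real_inner_self_eq_norm_sq, ← real_inner_self_eq_norm_sq, inner_toLp_mulVec,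
    inner_toLp_mulVec, inner_toLp_mulVec, mul_pow, normDet_toEuclideanLin_sq]
  exact hG.dotProduct_mulVec_mul_sub_sq x y

theorem parImage_eq_image (m : ℕ) (M : Matrix (Fin m) (Fin 2) ℝ) :
    parImage m M = Matrix.toEuclideanLin M '' parImage 2 1 := by
  rw [parImage, parImage, Set.image_image]
  refine Set.image_congr fun t _ => ?_
  simp

theorem hausdorffMeasure_parImage (m : ℕ) (M : Matrix (Fin m) (Fin 2) ℝ) :
    μH[2] (parImage m M) =
      ENNReal.ofReal (Matrix.toEuclideanLin M).normDet * μH[2] (parImage 2 1) := by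
  have h := (Matrix.toEuclideanLin M).hausdorffMeasure_image (parImage 2 1)
  rw [finrank_euclideanSpace_fin] at h
  rw [parImage_eq_image]
  exact_mod_cast h

theorem parImage_two_one_eq_parallelepiped :
    parImage 2 1 = parallelepiped (EuclideanSpace.basisFun (Fin 2) ℝ) := by
  ext v
  simp only [parImage, mem_parallelepiped_iff, Set.mem_image, Set.mem_prod, Matrix.one_mulVec]
  constructor
  · rintro ⟨t, ⟨h₁, h₂⟩, rfl⟩
    refine ⟨![t.1, t.2], ⟨fun i => ?_, fun i => ?_⟩, ?_⟩
    · fin_cases i <;> simp [h₁.1, h₂.1]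
    · fin_cases i <;> simp [h₁.2, h₂.2]
    · ext i
      fin_cases i <;> simp
  · rintro ⟨t, ⟨h₀, h₁⟩, rfl⟩
    refine ⟨(t 0, t 1), ⟨⟨h₀ 0, h₁ 0⟩, ⟨h₀ 1, h₁ 1⟩⟩, ?_⟩
    ext i
    fin_cases i <;> simp

instance isAddHaarMeasure_hausdorffMeasure_two :
    (μH[2] : MeasureTheory.Measure (EuclideanSpace ℝ (Fin 2))).IsAddHaarMeasure := by
  simpa using
    MeasureTheory.isAddHaarMeasure_hausdorffMeasure (E := EuclideanSpace ℝ (Fin 2))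

theorem toReal_hausdorffMeasure_parImage_two_one_pos : 0 < (μH[2] (parImage 2 1)).toReal := by
  have hsq : parImage 2 1 = (EuclideanSpace.basisFun (Fin 2) ℝ).toBasis.parallelepiped := by
    rw [Module.Basis.coe_parallelepiped, OrthonormalBasis.coe_toBasis,
      parImage_two_one_eq_parallelepiped]
  rw [hsq]
  exact ENNReal.toReal_pos
    (Measure.measure_pos_of_nonempty_interior _
      (TopologicalSpace.PositiveCompacts.interior_nonempty _)).ne'
    (TopologicalSpace.PositiveCompacts.isCompact _).measure_ne_top

/-- reduced basis of a rank-2 lattice adapted to a full-rank `m×2` matrix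
(Lemma 4.2 / Maynard's geometry-of-numbers lemma). -/
theorem statement11 (m : ℕ) :
    ∃ K : ℝ, 0 < K ∧
      ∀ b₁ b₂ : Fin 2 → ℝ, LinearIndependent ℝ ![b₁, b₂] →
      ∀ M : Matrix (Fin m) (Fin 2) ℝ, M.rank = 2 →
      ∀ x₁ : Fin 2 → ℝ, x₁ ∈ latticeOf b₁ b₂ → x₁ ≠ 0 →
        (∀ x : Fin 2 → ℝ, x ∈ latticeOf b₁ b₂ → x ≠ 0 →
          enorm' (M.mulVec x₁) ≤ enorm' (M.mulVec x)) →
      ∃ x₂ : Fin 2 → ℝ, x₂ ∈ latticeOf b₁ b₂ ∧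
        (∀ x : Fin 2 → ℝ, x ∈ latticeOf b₁ b₂ ↔ ∃ p q : ℤ, x = p • x₁ + q • x₂) ∧
        (∀ r : ℝ × ℝ,
          K⁻¹ * (|r.1| * enorm' (M.mulVec x₁) + |r.2| * enorm' (M.mulVec x₂)) ≤
              enorm' (r.1 • M.mulVec x₁ + r.2 • M.mulVec x₂) ∧
            enorm' (r.1 • M.mulVec x₁ + r.2 • M.mulVec x₂) ≤
              K * (|r.1| * enorm' (M.mulVec x₁) + |r.2| * enorm' (M.mulVec x₂))) ∧
        (K⁻¹ * (|b₁ 0 * b₂ 1 - b₁ 1 * b₂ 0| * (μH[2] (parImage m M)).toReal) ≤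
            enorm' (M.mulVec x₁) * enorm' (M.mulVec x₂) ∧
          enorm' (M.mulVec x₁) * enorm' (M.mulVec x₂) ≤
            K * (|b₁ 0 * b₂ 1 - b₁ 1 * b₂ 0| * (μH[2] (parImage m M)).toReal)) := by
  -- `μH[2]` is not normalised, so `κ = μH[2] ([0,1]²)` (which is `4/π`) enters the constant.
  set κ := (μH[2] (parImage 2 1)).toReal
  have hκ : 0 < κ := toReal_hausdorffMeasure_parImage_two_one_pos
  obtain ⟨K, hK2, hKκ, hKκ2⟩ : ∃ K : ℝ, 2 ≤ K ∧ κ ≤ K ∧ 2 ≤ K * κ := by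
    have : 0 < 2 / κ := by positivity
    refine ⟨2 + κ + 2 / κ, by linarith, by linarith, ?_⟩
    rw [add_mul, div_mul_cancel₀ _ hκ.ne']
    nlinarith
  refine ⟨K, by positivity, fun b₁ b₂ hb M hM x₁ hx₁ hx₁0 hmin => ?_⟩
  obtain ⟨x₂, hlat, hcross, hred⟩ := exists_isGaussReduced_partner_of_mulVec_injective
    (Matrix.mulVec_injective_of_rank_eq_card (by simpa using hM)) hb hx₁ hx₁0 hmin
  have hgram := norm_sq_mul_norm_sq_sub_inner_sq M x₁ x₂
  rw [hcross, mul_pow, ← sq_abs (b₁ 0 * b₂ 1 - b₁ 1 * b₂ 0),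
    ← mul_pow |b₁ 0 * b₂ 1 - b₁ 1 * b₂ 0|] at hgram
  refine ⟨x₂, hlat ▸ ⟨0, 1, by simp⟩, fun x => by rw [← hlat]; rfl, fun r => ?_, ?_⟩
  · simp only [enorm'_eq_norm, WithLp.toLp_add, WithLp.toLp_smul]
    exact hred.norm_smul_add_smul_mem_Icc hK2 r.1 r.2
  · rw [hausdorffMeasure_parImage, ENNReal.toReal_mul,
      ENNReal.toReal_ofReal (LinearMap.normDet_nonneg _),
      ← mul_assoc |b₁ 0 * b₂ 1 - b₁ 1 * b₂ 0|, enorm'_eq_norm, enorm'_eq_norm]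
    exact hred.norm_mul_norm_mem_Icc (by positivity) hKκ hKκ2
      (mul_nonneg (abs_nonneg _) (LinearMap.normDet_nonneg _)) hgram.symm
end

section
/- Let s, q₁, q₂, d₁, d₂ ≥ 1 be integers with gcd(q₁,q₂) = 1, d₁ | q₁ and d₂ | q₂. Then for every primitive vector c ∈ ℤ² and every u ∈ ℤ^s: D_{q₁q₂}(u) = D_{q₁}(u) · D_{q₂}(u), and S_{q₁q₂, d₁d₂c}(u) = S_{q₁, d₁c}(u) · S_{q₂, d₂c}(u). -/
open MeasureTheory Real Matrix Finset

/-!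
By the Chinese remainder theorem `ZMod (q₁ * q₂) ≃+* ZMod q₁ × ZMod q₂`, and if
`A * q₁ + B * q₂ = 1` the standard character splits as
`e_{q₁q₂}(x) = e_{q₁}(B x) e_{q₂}(A x)`. The phase `a₁F₁(b) + a₂F₂(b) + b·u` is a polynomial
in `a, b`, so it commutes with both reductions, and the summation conditions split as well:
`gcd(a₁, a₂, q) = 1` says that `a₁, a₂` are coprime in `ZMod q`, and `q ∣ d (c·a^⊥)` says
`d (c·a^⊥) = 0` in `ZMod q`, where the factor `d₂` is a unit mod `q₁` (and `d₁` mod `q₂`).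
Hence each sum over `ZMod (q₁ * q₂)` factors into sums with the twisted characters
`e_{q₁}(B ·)` and `e_{q₂}(A ·)`. The twist by a unit `v` is undone by substituting
`a ↦ v a`, `b ↦ v⁻¹ b`, which multiplies the phase by `v⁻¹` and preserves the conditions.
-/

section PhasePoly

variable {s : ℕ} {R S : Type*} [CommRing R] [CommRing S]

def phasePoly (M₁ M₂ : Matrix (Fin s) (Fin s) ℤ) (u : Fin s → ℤ) (a : R × R)
    (b : Fin s → R) : R :=
  a.1 * quadEval M₁ b + a.2 * quadEval M₂ b + ∑ i, b i * u i

lemma map_quadEval (f : R →+* S) (M : Matrix (Fin s) (Fin s) ℤ) (x : Fin s → R) :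
    f (quadEval M x) = quadEval M (fun i => f (x i)) := by
  simp [quadEval]

lemma quadEval_smul (M : Matrix (Fin s) (Fin s) ℤ) (r : R) (x : Fin s → R) :
    quadEval M (r • x) = r ^ 2 * quadEval M x := by
  simp only [quadEval, Pi.smul_apply, smul_eq_mul, mul_sum]
  exact sum_congr rfl fun i _ => sum_congr rfl fun j _ => by ring

variable (M₁ M₂ : Matrix (Fin s) (Fin s) ℤ) (u : Fin s → ℤ)

lemma map_phasePoly (f : R →+* S) (a : R × R) (b : Fin s → R) :
    f (phasePoly M₁ M₂ u a b) = phasePoly M₁ M₂ u (f a.1, f a.2) (fun i => f (b i)) := by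
  simp [phasePoly, map_quadEval]

lemma phasePoly_units_smul (v : Rˣ) (a : R × R) (b : Fin s → R) :
    phasePoly M₁ M₂ u (v • a) (v⁻¹ • b) = (v⁻¹ : Rˣ) * phasePoly M₁ M₂ u a b := by
  have hv : (v : R) * (v⁻¹ : Rˣ) = 1 := v.mul_inv
  simp only [phasePoly, Prod.smul_fst, Prod.smul_snd, Units.smul_def, quadEval_smul,
    Pi.smul_apply, smul_eq_mul]
  rw [mul_add, mul_add, mul_sum]
  simp only [← mul_assoc]
  linear_combination (a.1 * (v⁻¹ : Rˣ) * quadEval M₁ b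
    + a.2 * (v⁻¹ : Rˣ) * quadEval M₂ b) * hv

end PhasePoly

section Conditions

variable {R S R₁ R₂ : Type*} [CommRing R] [CommRing S] [CommRing R₁] [CommRing R₂]

def dotPerp (c : ℤ × ℤ) (a : R × R) : R := c.1 * a.2 - c.2 * a.1

lemma map_dotPerp (f : R →+* S) (c : ℤ × ℤ) (a : R × R) :
    f (dotPerp c a) = dotPerp c (f a.1, f a.2) := by
  simp [dotPerp]

lemma mul_dotPerp_units_smul_eq_zero_iff (d : ℕ) (c : ℤ × ℤ) (v : Rˣ) (a : R × R) :
    (d : R) * dotPerp c (v • a) = 0 ↔ (d : R) * dotPerp c a = 0 := by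
  have h : dotPerp c (v • a) = v * dotPerp c a := by
    simp only [dotPerp, Prod.smul_fst, Prod.smul_snd, Units.smul_def]
    ring
  rw [h, mul_left_comm, Units.mul_right_eq_zero]

lemma isCoprime_units_smul (v : Rˣ) (a : R × R) :
    IsCoprime (v • a).1 (v • a).2 ↔ IsCoprime a.1 a.2 :=
  isCoprime_mul_unit_left v.isUnit a.1 a.2

lemma isCoprime_prod_iff (x y : R₁ × R₂) :
    IsCoprime x y ↔ IsCoprime x.1 y.1 ∧ IsCoprime x.2 y.2 := by
  refine ⟨fun h => ⟨h.map (RingHom.fst R₁ R₂), h.map (RingHom.snd R₁ R₂)⟩, ?_⟩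
  rintro ⟨⟨a₁, b₁, h₁⟩, ⟨a₂, b₂, h₂⟩⟩
  exact ⟨(a₁, a₂), (b₁, b₂), Prod.ext h₁ h₂⟩

lemma isCoprime_iff_of_ringEquiv (e : R ≃+* R₁ × R₂) (a : R × R) :
    IsCoprime a.1 a.2 ↔
      IsCoprime (e a.1).1 (e a.2).1 ∧ IsCoprime (e a.1).2 (e a.2).2 := by
  rw [← isCoprime_prod_iff]
  refine ⟨fun h => h.map e.toRingHom, fun h => ?_⟩
  simpa using h.map e.symm.toRingHom

lemma mul_dotPerp_eq_zero_iff_of_ringEquiv (e : R ≃+* R₁ × R₂) (c : ℤ × ℤ) {d₁ d₂ : ℕ}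
    (hd₂ : IsUnit (d₂ : R₁)) (hd₁ : IsUnit (d₁ : R₂)) (a : R × R) :
    ((d₁ * d₂ : ℕ) : R) * dotPerp c a = 0 ↔
      (d₁ : R₁) * dotPerp c ((e a.1).1, (e a.2).1) = 0 ∧
        (d₂ : R₂) * dotPerp c ((e a.1).2, (e a.2).2) = 0 := by
  have h₁ := map_dotPerp ((RingHom.fst R₁ R₂).comp e.toRingHom) c a
  have h₂ := map_dotPerp ((RingHom.snd R₁ R₂).comp e.toRingHom) c a
  simp only [RingHom.comp_apply, RingEquiv.toRingHom_eq_coe, RingEquiv.coe_toRingHom,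
    RingHom.coe_fst, RingHom.coe_snd] at h₁ h₂
  rw [← e.map_eq_zero_iff, Prod.ext_iff, map_mul, map_natCast, Prod.fst_mul, Prod.snd_mul,
    Prod.fst_natCast, Prod.snd_natCast, h₁, h₂, Nat.cast_mul, Nat.cast_mul, Prod.fst_zero,
    Prod.snd_zero, mul_right_comm, hd₂.mul_left_eq_zero, mul_assoc, hd₁.mul_right_eq_zero]

end Conditions

section ExpSum

variable {s : ℕ} (M₁ M₂ : Matrix (Fin s) (Fin s) ℤ) (u : Fin s → ℤ)
variable {R R₁ R₂ : Type*} [CommRing R] [Fintype R] [CommRing R₁] [Fintype R₁]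
  [CommRing R₂] [Fintype R₂]

open Classical in
noncomputable def expSum (ψ : R → ℂ) (P : R × R → Prop) : ℂ :=
  ∑ a ∈ univ.filter P, ∑ b : Fin s → R, ψ (phasePoly M₁ M₂ u a b)

lemma expSum_mul_shift (ψ : R → ℂ) (P : R × R → Prop) (v : Rˣ)
    (hP : ∀ a, P (v • a) ↔ P a) :
    expSum M₁ M₂ u (fun x => ψ (v * x)) P = expSum M₁ M₂ u ψ P := by
  refine sum_equiv (MulAction.toPerm v⁻¹) (fun a => ?_) (fun a _ => ?_)
  · simp [← hP (v⁻¹ • a)]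
  · refine Fintype.sum_equiv (MulAction.toPerm v) _ _ fun b => ?_
    simpa using congrArg ψ (phasePoly_units_smul M₁ M₂ u v⁻¹ a b).symm

lemma sum_phasePoly_eq_mul_of_ringEquiv (e : R ≃+* R₁ × R₂) (ψ : R → ℂ) (ψ₁ : R₁ → ℂ) (ψ₂ : R₂ → ℂ)
    (hψ : ∀ x, ψ x = ψ₁ (e x).1 * ψ₂ (e x).2) (a : R × R) :
    ∑ b : Fin s → R, ψ (phasePoly M₁ M₂ u a b) =
      (∑ b : Fin s → R₁, ψ₁ (phasePoly M₁ M₂ u ((e a.1).1, (e a.2).1) b)) *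
        ∑ b : Fin s → R₂, ψ₂ (phasePoly M₁ M₂ u ((e a.1).2, (e a.2).2) b) := by
  rw [sum_mul_sum, ← Fintype.sum_prod_type']
  let F : (Fin s → R) ≃ (Fin s → R₁) × (Fin s → R₂) :=
    (Equiv.piCongrRight fun _ => e.toEquiv).trans (Equiv.arrowProdEquivProdArrow _ _ _)
  refine Fintype.sum_equiv F _ _ fun b => ?_
  have h₁ := map_phasePoly M₁ M₂ u ((RingHom.fst R₁ R₂).comp e.toRingHom) a b
  have h₂ := map_phasePoly M₁ M₂ u ((RingHom.snd R₁ R₂).comp e.toRingHom) a b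
  simp only [RingHom.comp_apply, RingEquiv.toRingHom_eq_coe, RingEquiv.coe_toRingHom,
    RingHom.coe_fst, RingHom.coe_snd] at h₁ h₂
  rw [hψ, h₁, h₂]
  rfl

lemma expSum_eq_mul_of_ringEquiv (e : R ≃+* R₁ × R₂) (ψ : R → ℂ) (ψ₁ : R₁ → ℂ)
    (ψ₂ : R₂ → ℂ) (hψ : ∀ x, ψ x = ψ₁ (e x).1 * ψ₂ (e x).2)
    (P : R × R → Prop) (P₁ : R₁ × R₁ → Prop) (P₂ : R₂ × R₂ → Prop)
    (hP : ∀ a, P a ↔ P₁ ((e a.1).1, (e a.2).1) ∧ P₂ ((e a.1).2, (e a.2).2)) :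
    expSum M₁ M₂ u ψ P = expSum M₁ M₂ u ψ₁ P₁ * expSum M₁ M₂ u ψ₂ P₂ := by
  classical
  conv_rhs => rw [expSum, expSum, sum_mul_sum, ← sum_product']
  rw [expSum]
  let E : R × R ≃ (R₁ × R₁) × (R₂ × R₂) :=
    (e.toEquiv.prodCongr e.toEquiv).trans (Equiv.prodProdProdComm _ _ _ _)
  refine sum_equiv E (fun a => ?_)
    (fun a _ => sum_phasePoly_eq_mul_of_ringEquiv M₁ M₂ u e ψ ψ₁ ψ₂ hψ a)
  simpa [E] using hP a

end ExpSum

section ZModSums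

open ZMod

variable {s : ℕ} (M₁ M₂ : Matrix (Fin s) (Fin s) ℤ) (u : Fin s → ℤ)

lemma eqc_eq_stdAddChar (q : ℕ) [NeZero q] (n : ℤ) : eqc q n = stdAddChar (n : ZMod q) := by
  rw [stdAddChar_coe, eqc, e2pi]
  push_cast
  ring_nf

lemma isCoprime_natCast_zmod_iff (q m n : ℕ) :
    IsCoprime (m : ZMod q) (n : ZMod q) ↔ Nat.gcd (Nat.gcd m n) q = 1 := by
  constructor
  · intro h
    set g := Nat.gcd (Nat.gcd m n) q
    have hg := h.map (castHom (Nat.gcd_dvd_right _ q) (ZMod g))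
    rw [map_natCast, map_natCast,
      (natCast_eq_zero_iff m g).mpr ((Nat.gcd_dvd_left _ _).trans (Nat.gcd_dvd_left _ _)),
      (natCast_eq_zero_iff n g).mpr ((Nat.gcd_dvd_left _ _).trans (Nat.gcd_dvd_right _ _)),
      isCoprime_zero_left, isUnit_zero_iff] at hg
    exact subsingleton_iff.mp (subsingleton_of_zero_eq_one hg)
  · intro h
    obtain ⟨w, hw⟩ := (isUnit_iff_coprime _ _).mpr h
    have hbez : ((Nat.gcd m n : ℕ) : ZMod q) = m * Nat.gcdA m n + n * Nat.gcdB m n := by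
      exact_mod_cast congrArg (Int.cast : ℤ → ZMod q) (Nat.gcd_eq_gcd_ab m n)
    refine ⟨(w⁻¹ : (ZMod q)ˣ) * Nat.gcdA m n, (w⁻¹ : (ZMod q)ˣ) * Nat.gcdB m n, ?_⟩
    linear_combination (-((w⁻¹ : (ZMod q)ˣ) : ZMod q)) * hbez -
      ((w⁻¹ : (ZMod q)ˣ) : ZMod q) * hw + w.inv_mul

lemma sum_piFinset_range_eq_sum_zmod {ι M : Type*} [Fintype ι] [DecidableEq ι]
    [AddCommMonoid M] (q : ℕ) [NeZero q] (f : (ι → ℕ) → M) :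
    ∑ b ∈ Fintype.piFinset (fun _ : ι => range q), f b =
      ∑ b : ι → ZMod q, f (fun i => (b i).val) := by
  symm
  refine sum_nbij' (fun b i => (b i).val) (fun b i => (b i : ZMod q)) ?_ ?_ ?_ ?_ ?_
  all_goals intro x hx
  all_goals simp_all [val_lt, Nat.mod_eq_of_lt]

lemma sum_filter_range_product_eq_sum_zmod {M : Type*} [AddCommMonoid M] (q : ℕ) [NeZero q]
    (P : ℕ × ℕ → Prop) [DecidablePred P] (f : ℕ × ℕ → M) :
    ∑ a ∈ (range q ×ˢ range q).filter P, f a =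
      ∑ a : ZMod q × ZMod q with P (a.1.val, a.2.val), f (a.1.val, a.2.val) := by
  symm
  refine sum_nbij' (fun a => (a.1.val, a.2.val)) (fun a => ((a.1 : ZMod q), (a.2 : ZMod q)))
    ?_ ?_ ?_ ?_ ?_
  all_goals intro x hx
  all_goals simp_all [val_lt, Nat.mod_eq_of_lt]

lemma sum_residues_eq_expSum (q : ℕ) [NeZero q] (P : ℕ × ℕ → Prop) [DecidablePred P]
    (P' : ZMod q × ZMod q → Prop) (hP : ∀ a : ZMod q × ZMod q, P (a.1.val, a.2.val) ↔ P' a) :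
    ∑ a ∈ (range q ×ˢ range q).filter P, ∑ b ∈ Fintype.piFinset (fun _ : Fin s => range q),
      eqc q ((a.1 : ℤ) * quadEval M₁ (fun i => (b i : ℤ)) +
        (a.2 : ℤ) * quadEval M₂ (fun i => (b i : ℤ)) + ∑ i, (b i : ℤ) * u i) =
      expSum M₁ M₂ u stdAddChar P' := by
  classical
  rw [sum_filter_range_product_eq_sum_zmod, expSum]
  refine sum_congr (filter_congr fun a _ => hP a) fun a _ => ?_
  rw [sum_piFinset_range_eq_sum_zmod]
  refine sum_congr rfl fun b _ => ?_
  rw [eqc_eq_stdAddChar]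
  congr 1
  push_cast [phasePoly, quadEval]
  simp

lemma Dq_eq_expSum (q : ℕ) [NeZero q] :
    Dq s M₁ M₂ q u =
      expSum M₁ M₂ u stdAddChar (fun a : ZMod q × ZMod q => IsCoprime a.1 a.2) :=
  sum_residues_eq_expSum M₁ M₂ u q _ _ fun a => by
    rw [← isCoprime_natCast_zmod_iff, natCast_zmod_val a.1, natCast_zmod_val a.2]

lemma Sq_eq_expSum (q d : ℕ) [NeZero q] (c : ℤ × ℤ) :
    Sq s M₁ M₂ q d c u =
      expSum M₁ M₂ u stdAddChar
        (fun a => IsCoprime a.1 a.2 ∧ (d : ZMod q) * dotPerp c a = 0) := by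
  rw [Sq, residues, filter_filter]
  refine sum_residues_eq_expSum M₁ M₂ u q _ _ fun a => ?_
  rw [← isCoprime_natCast_zmod_iff, natCast_zmod_val a.1, natCast_zmod_val a.2,
    ← intCast_zmod_eq_zero_iff_dvd]
  push_cast [dotPerp]
  simp

lemma stdAddChar_eq_mul_of_chineseRemainder {q₁ q₂ : ℕ} [NeZero q₁] [NeZero q₂]
    (hcop : q₁.Coprime q₂) {A B : ℤ} (hAB : A * q₁ + B * q₂ = 1) (x : ZMod (q₁ * q₂)) :
    stdAddChar x =
      stdAddChar ((B : ZMod q₁) * (chineseRemainder hcop x).1) *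
        stdAddChar ((A : ZMod q₂) * (chineseRemainder hcop x).2) := by
  obtain ⟨n, rfl⟩ := intCast_surjective x
  simp only [map_intCast, Prod.fst_intCast, Prod.snd_intCast, ← Int.cast_mul, stdAddChar_coe,
    ← Complex.exp_add]
  have hAB' : (A : ℂ) * q₁ + B * q₂ = 1 := by exact_mod_cast hAB
  have h₁ : (q₁ : ℂ) ≠ 0 := Nat.cast_ne_zero.mpr (NeZero.ne q₁)
  have h₂ : (q₂ : ℂ) ≠ 0 := Nat.cast_ne_zero.mpr (NeZero.ne q₂)
  congr 1
  push_cast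
  field_simp
  linear_combination (-(n : ℂ)) * hAB'

lemma expSum_stdAddChar_mul {q₁ q₂ : ℕ} [NeZero q₁] [NeZero q₂] (hcop : q₁.Coprime q₂)
    (P : ZMod (q₁ * q₂) × ZMod (q₁ * q₂) → Prop) (P₁ : ZMod q₁ × ZMod q₁ → Prop)
    (P₂ : ZMod q₂ × ZMod q₂ → Prop)
    (hP : ∀ a, P a ↔ P₁ ((chineseRemainder hcop a.1).1, (chineseRemainder hcop a.2).1) ∧
      P₂ ((chineseRemainder hcop a.1).2, (chineseRemainder hcop a.2).2))
    (hP₁ : ∀ (v : (ZMod q₁)ˣ) a, P₁ (v • a) ↔ P₁ a)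
    (hP₂ : ∀ (v : (ZMod q₂)ˣ) a, P₂ (v • a) ↔ P₂ a) :
    expSum M₁ M₂ u stdAddChar P =
      expSum M₁ M₂ u stdAddChar P₁ * expSum M₁ M₂ u stdAddChar P₂ := by
  obtain ⟨A, B, hAB⟩ := Nat.isCoprime_iff_coprime.mpr hcop
  have hAB₁ := congrArg (Int.cast : ℤ → ZMod q₁) hAB
  have hAB₂ := congrArg (Int.cast : ℤ → ZMod q₂) hAB
  push_cast [natCast_self, mul_zero, zero_add, add_zero] at hAB₁ hAB₂
  obtain ⟨vB, hvB⟩ : IsUnit (B : ZMod q₁) := IsUnit.of_mul_eq_one _ hAB₁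
  obtain ⟨vA, hvA⟩ : IsUnit (A : ZMod q₂) := IsUnit.of_mul_eq_one _ hAB₂
  rw [expSum_eq_mul_of_ringEquiv M₁ M₂ u (chineseRemainder hcop) stdAddChar
      (fun x => stdAddChar ((vB : ZMod q₁) * x)) (fun x => stdAddChar ((vA : ZMod q₂) * x))
      ?_ P P₁ P₂ hP,
    expSum_mul_shift _ _ _ _ _ vB (hP₁ vB), expSum_mul_shift _ _ _ _ _ vA (hP₂ vA)]
  simpa [hvA, hvB] using stdAddChar_eq_mul_of_chineseRemainder hcop hAB

end ZModSums

theorem statement15_general (s : ℕ) (M₁ M₂ : Matrix (Fin s) (Fin s) ℤ)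
    (q₁ q₂ d₁ d₂ : ℕ) (hq₁ : 1 ≤ q₁) (hq₂ : 1 ≤ q₂)
    (hcop : Nat.Coprime q₁ q₂) (hdq₁ : d₁ ∣ q₁) (hdq₂ : d₂ ∣ q₂)
    (c : ℤ × ℤ) (u : Fin s → ℤ) :
    Dq s M₁ M₂ (q₁ * q₂) u = Dq s M₁ M₂ q₁ u * Dq s M₁ M₂ q₂ u ∧
    Sq s M₁ M₂ (q₁ * q₂) (d₁ * d₂) c u = Sq s M₁ M₂ q₁ d₁ c u * Sq s M₁ M₂ q₂ d₂ c u := by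
  have : NeZero q₁ := ⟨by omega⟩
  have : NeZero q₂ := ⟨by omega⟩
  have hd₁ : IsUnit (d₁ : ZMod q₂) :=
    (ZMod.isUnit_iff_coprime _ _).mpr (hcop.coprime_dvd_left hdq₁)
  have hd₂ : IsUnit (d₂ : ZMod q₁) :=
    (ZMod.isUnit_iff_coprime _ _).mpr (hcop.symm.coprime_dvd_left hdq₂)
  refine ⟨?_, ?_⟩
  · simp only [Dq_eq_expSum]
    exact expSum_stdAddChar_mul M₁ M₂ u hcop _ _ _ (isCoprime_iff_of_ringEquiv _)
      isCoprime_units_smul isCoprime_units_smul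
  · simp only [Sq_eq_expSum]
    refine expSum_stdAddChar_mul M₁ M₂ u hcop _ _ _ (fun a => ?_)
      (fun v a => (isCoprime_units_smul v a).and (mul_dotPerp_units_smul_eq_zero_iff _ c v a))
      (fun v a => (isCoprime_units_smul v a).and (mul_dotPerp_units_smul_eq_zero_iff _ c v a))
    rw [isCoprime_iff_of_ringEquiv (ZMod.chineseRemainder hcop),
      mul_dotPerp_eq_zero_iff_of_ringEquiv _ c hd₂ hd₁]
    tauto

/-- multiplicativity of the exponential sums `D_q` and `S_{q,dc}`. -/
theorem statement15 (s : ℕ) (M₁ M₂ : Matrix (Fin s) (Fin s) ℤ)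
    (hM₁ : M₁.IsSymm) (hM₂ : M₂.IsSymm)
    (q₁ q₂ d₁ d₂ : ℕ) (hq₁ : 1 ≤ q₁) (hq₂ : 1 ≤ q₂) (hd₁ : 1 ≤ d₁) (hd₂ : 1 ≤ d₂)
    (hcop : Nat.Coprime q₁ q₂) (hdq₁ : d₁ ∣ q₁) (hdq₂ : d₂ ∣ q₂)
    (c : ℤ × ℤ) (hc : Int.gcd c.1 c.2 = 1) (u : Fin s → ℤ) :
    Dq s M₁ M₂ (q₁ * q₂) u = Dq s M₁ M₂ q₁ u * Dq s M₁ M₂ q₂ u ∧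
    Sq s M₁ M₂ (q₁ * q₂) (d₁ * d₂) c u = Sq s M₁ M₂ q₁ d₁ c u * Sq s M₁ M₂ q₂ d₂ c u :=
  statement15_general s M₁ M₂ q₁ q₂ d₁ d₂ hq₁ hq₂ hcop hdq₁ hdq₂ c u
end
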